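/- Suppose a nonnegative sequence e(t) satisfies e(t+1) ≤ (1 - 2g(t)/A)·e(t) + (C/A)·g(t)², where g : ℕ → ℝ is positive, nonincreasing, g(t) ≤ A/2, (1 - g(t)/A)·g(t) ≤ g(t+1), and e(0) ≤ C·g(0). Then e(t) ≤ C·g(t) for all t ∈ ℕ. -/

import Mathlib

/-! The bound `e t ≤ C * g t` propagates by induction: feeding it into the recursion, the
contraction `1 - 2 g/A` and the error `(C/A) g²` combine exactly into `C (1 - g/A) g`, which the
lower bound on `g (t + 1)` turns into `C g (t + 1)`. -/

lemma contraction_add_sq_le {A C x y e : ℝ} (hA : 0 < A) (hC : 0 ≤ C) (hxA : x ≤ A / 2)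
    (he : e ≤ C * x) (hy : (1 - x / A) * x ≤ y) :
    (1 - 2 * x / A) * e + C / A * x ^ 2 ≤ C * y := by
  have hfac : 0 ≤ 1 - 2 * x / A := by
    rw [sub_nonneg, div_le_one hA]
    linarith
  calc (1 - 2 * x / A) * e + C / A * x ^ 2
      ≤ (1 - 2 * x / A) * (C * x) + C / A * x ^ 2 := by gcongr
    _ = C * ((1 - x / A) * x) := by ring
    _ ≤ C * y := mul_le_mul_of_nonneg_left hy hC

theorem stmt_9_general (e g : ℕ → ℝ) (A C : ℝ) (hA : 0 < A)
    (he : ∀ t, 0 ≤ e t) (hgpos : ∀ t, 0 < g t)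
    (hgA : ∀ t, g t ≤ A / 2)
    (hglow : ∀ t, (1 - g t / A) * g t ≤ g (t + 1))
    (hrec : ∀ t, e (t + 1) ≤ (1 - 2 * g t / A) * e t + (C / A) * (g t) ^ 2)
    (h0 : e 0 ≤ C * g 0) :
    ∀ t, e t ≤ C * g t := by
  have hC : 0 ≤ C := nonneg_of_mul_nonneg_left ((he 0).trans h0) (hgpos 0)
  intro t
  induction t with
  | zero => exact h0
  | succ t ih => exact (hrec t).trans (contraction_add_sq_le hA hC (hgA t) ih (hglow t))

theorem stmt_9 (e g : ℕ → ℝ) (A C : ℝ) (hA : 0 < A)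
    (he : ∀ t, 0 ≤ e t) (hgpos : ∀ t, 0 < g t)
    (hmono : ∀ t, g (t + 1) ≤ g t) (hgA : ∀ t, g t ≤ A / 2)
    (hglow : ∀ t, (1 - g t / A) * g t ≤ g (t + 1))
    (hrec : ∀ t, e (t + 1) ≤ (1 - 2 * g t / A) * e t + (C / A) * (g t) ^ 2)
    (h0 : e 0 ≤ C * g 0) :
    ∀ t, e t ≤ C * g t :=
  stmt_9_general e g A C hA he hgpos hgA hglow hrec h0
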